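/- Let K be a nonempty compact subset of ℝ^d, let E be a compact subset of K and let α > 0. Assume P^α(E) < +∞. Then there exists a measure μ ∈ P(K) such that for every x ∈ E, the upper local dimension dim_loc^+(μ;x) is at most α. -/

import Mathlib

open MeasureTheory Filter Metric Set Topology
open scoped ENNReal

/-- The `δ`-packing premeasure in dimension `s`: the supremum of `∑ (2 rᵢ)^s` over all
countable packings of `E` by pairwise disjoint closed balls centered in `E`
with radii in `(0, δ]`. -/
noncomputable def packingPre {X : Type*} [MetricSpace X] (s : ℝ) (δ : ℝ) (E : Set X) : ℝ≥0∞ :=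
  ⨆ (P : Set (X × ℝ)) (_ : P.Countable)
    (_ : ∀ p ∈ P, p.1 ∈ E ∧ 0 < p.2 ∧ p.2 ≤ δ)
    (_ : P.PairwiseDisjoint fun p => Metric.closedBall p.1 p.2),
    ∑' p : P, ENNReal.ofReal ((2 * (p : X × ℝ).2) ^ s)

/-- The packing premeasure in dimension `s`. -/
noncomputable def packingPre0 {X : Type*} [MetricSpace X] (s : ℝ) (E : Set X) : ℝ≥0∞ :=
  ⨅ (δ : ℝ) (_ : 0 < δ), packingPre s δ E

/-- The `s`-dimensional packing measure. -/
noncomputable def packingMeasure {X : Type*} [MetricSpace X] (s : ℝ) (E : Set X) : ℝ≥0∞ :=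
  ⨅ (F : ℕ → Set X) (_ : E ⊆ ⋃ n, F n), ∑' n, packingPre0 s (F n)

/-- The packing dimension of a set. -/
noncomputable def packingDim {X : Type*} [MetricSpace X] (E : Set X) : ℝ≥0∞ :=
  sInf {s : ℝ≥0∞ | packingMeasure s.toReal E = 0}

/-- `K` is Ahlfors regular: with `s = dimH K`, the `s`-dimensional Hausdorff measure of
`K ∩ B(x,r)` is comparable to `r^s` for `x ∈ K` and small `r`. -/
def AhlforsRegular {d : ℕ} (K : Set (EuclideanSpace ℝ (Fin d))) : Prop :=
  ∃ c₁ c₂ r₀ : ℝ, 0 < c₁ ∧ 0 < c₂ ∧ 0 < r₀ ∧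
    ∀ x ∈ K, ∀ r : ℝ, 0 < r → r < r₀ →
      ENNReal.ofReal (c₁ * r ^ (dimH K).toReal)
          ≤ μH[(dimH K).toReal] (K ∩ Metric.ball x r) ∧
        μH[(dimH K).toReal] (K ∩ Metric.ball x r)
          ≤ ENNReal.ofReal (c₂ * r ^ (dimH K).toReal)

/-- The upper local dimension of a measure at a point:
`limsup_{r → 0⁺} log μ(B(x,r)) / log r`. -/
noncomputable def upperLocalDim {X : Type*} [MetricSpace X] [MeasurableSpace X]
    (μ : Measure X) (x : X) : EReal :=
  Filter.limsup (fun r : ℝ => ENNReal.log (μ (Metric.ball x r)) / (Real.log r : EReal))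
    (nhdsWithin 0 (Set.Ioi 0))

/-- A probability measure on the subtype `↥K`, viewed as a Borel measure on `ℝ^d`. -/
noncomputable def measOn {d : ℕ} {K : Set (EuclideanSpace ℝ (Fin d))}
    (μ : ProbabilityMeasure K) : Measure (EuclideanSpace ℝ (Fin d)) :=
  (μ : Measure K).map Subtype.val

/-! For each scale, a maximal `ε`-separated subset of a piece `G` of `E` is an `ε`-net of `G`
whose balls of radius `ε/2` form a packing, so its cardinality is at most `P / ε^α`, where `P`
is a packing premeasure of `G`. Covering `E` by countably many pieces with finite packing
premeasure and putting mass `2^{-n} (k+1)^{-2} ε_k^α / P_n` on each point of the net of the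
`n`-th piece at the dyadic scale `ε_k`, the total mass is finite, while every ball `B(x, r)`
with `x` in the `n`-th piece and `r ≈ ε_k` receives mass `≳ r^α / log²(1/r) ≥ r^β` for any
`β > α` and `r` small. -/

open scoped NNReal

lemma Metric.finite_maximalSeparatedSet {X : Type*} [PseudoEMetricSpace X] (ε : ℝ≥0)
    (A : Set X) : (maximalSeparatedSet ε A).Finite := by
  rw [maximalSeparatedSet]
  split_ifs with h
  exacts [(exists_set_encard_eq_packingNumber h).choose_spec.2.1, finite_empty]

section Packing

variable {X : Type*} [MetricSpace X] {s δ : ℝ} {ε : ℝ≥0} {C G : Set X}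

lemma packingPre_mono {A B : Set X} (h : A ⊆ B) : packingPre s δ A ≤ packingPre s δ B :=
  iSup₂_mono fun _ _ => iSup_mono' fun hP => ⟨fun p hp => ⟨h (hP p hp).1, (hP p hp).2⟩, le_rfl⟩

lemma encard_mul_le_packingPre_of_countable (hCG : C ⊆ G) (hC : IsSeparated ε C)
    (hCc : C.Countable) (hε : 0 < ε) (hεδ : (ε : ℝ) ≤ 2 * δ) :
    (C.encard : ℝ≥0∞) * ENNReal.ofReal ((ε : ℝ) ^ s) ≤ packingPre s δ G := by
  set f : X → X × ℝ := fun y => (y, (ε : ℝ) / 2)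
  have hf : f.Injective := fun _ _ h => congrArg Prod.fst h
  have hdisj : (f '' C).PairwiseDisjoint fun p => closedBall p.1 p.2 := by
    rw [hf.injOn.pairwiseDisjoint_image]
    refine hC.mono' fun y z hyz => closedBall_disjoint_closedBall ?_
    rw [edist_dist, ENNReal.coe_nnreal_eq] at hyz
    simpa [f] using (ENNReal.ofReal_lt_ofReal_iff'.1 hyz).1
  have hsum : ∑' p : f '' C, ENNReal.ofReal ((2 * (p : X × ℝ).2) ^ s)
      = C.encard * ENNReal.ofReal ((ε : ℝ) ^ s) := by
    rw [← hf.injOn.encard_image, ← ENNReal.tsum_set_const]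
    refine tsum_congr fun ⟨p, y, _, hy⟩ => ?_
    subst hy
    simp [f, mul_div_cancel₀]
  rw [← hsum]
  refine le_iSup_of_le (f '' C) <| le_iSup_of_le (hCc.image f) <| le_iSup_of_le ?_ <|
    le_iSup_of_le hdisj le_rfl
  rintro _ ⟨y, hy, rfl⟩
  exact ⟨hCG hy, by simp [f, hε], by simp [f]; linarith⟩

lemma encard_mul_le_packingPre (hCG : C ⊆ G) (hC : IsSeparated ε C) (hε : 0 < ε)
    (hεδ : (ε : ℝ) ≤ 2 * δ) :
    (C.encard : ℝ≥0∞) * ENNReal.ofReal ((ε : ℝ) ^ s) ≤ packingPre s δ G := by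
  rcases C.finite_or_infinite with hfin | hinf
  · exact encard_mul_le_packingPre_of_countable hCG hC hfin.countable hε hεδ
  rw [hinf.encard_eq, ENat.toENNReal_top, ← ENNReal.iSup_natCast, ENNReal.iSup_mul]
  refine iSup_le fun n => ?_
  obtain ⟨t, htC, htn⟩ := Set.exists_subset_encard_eq (le_top.trans_eq hinf.encard_eq.symm :
    (n : ℕ∞) ≤ C.encard)
  have ht : t.Finite := Set.finite_of_encard_eq_coe htn
  simpa [htn] using encard_mul_le_packingPre_of_countable (htC.trans hCG) (hC.subset htC)
    ht.countable hε hεδ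

lemma packingNumber_mul_le_packingPre (hε : 0 < ε) (hεδ : (ε : ℝ) ≤ 2 * δ) :
    (packingNumber ε G : ℝ≥0∞) * ENNReal.ofReal ((ε : ℝ) ^ s) ≤ packingPre s δ G := by
  simp only [packingNumber, ENat.toENNReal_iSup, ENNReal.iSup_mul]
  exact iSup_le fun C => iSup_le fun hCG => iSup_le fun hC =>
    encard_mul_le_packingPre hCG hC hε hεδ

lemma isCover_maximalSeparatedSet_of_packingPre_ne_top (hε : 0 < ε) (hεδ : (ε : ℝ) ≤ 2 * δ)
    (hP : packingPre s δ G ≠ ⊤) :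
    IsCover ε G (maximalSeparatedSet ε G) := by
  refine isCover_maximalSeparatedSet fun h => hP (eq_top_iff.2 ?_)
  have hc : ENNReal.ofReal ((ε : ℝ) ^ s) ≠ 0 := by
    simpa using Real.rpow_pos_of_pos (NNReal.coe_pos.2 hε) s
  simpa [h, ENNReal.top_mul hc] using packingNumber_mul_le_packingPre (s := s) (G := G) hε hεδ

end Packing

lemma exists_cover_packingPre_ne_top {X : Type*} [MetricSpace X] {s : ℝ} {E : Set X}
    (hE : packingMeasure s E < ⊤) :
    ∃ (G : ℕ → Set X) (δ : ℕ → ℝ≥0), (∀ n, G n ⊆ E) ∧ E ⊆ ⋃ n, G n ∧ (∀ n, 0 < δ n) ∧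
      ∀ n, packingPre s (δ n) (G n) ≠ ⊤ := by
  obtain ⟨F, hF⟩ := iInf_lt_iff.1 hE
  obtain ⟨hEF, hsum⟩ := iInf_lt_iff.1 hF
  have hδ : ∀ n, ∃ δ : ℝ≥0, 0 < δ ∧ packingPre s δ (F n) < ⊤ := fun n => by
    obtain ⟨δ, hδ⟩ := iInf_lt_iff.1 ((ENNReal.le_tsum n).trans_lt hsum)
    obtain ⟨hδ₀, hδP⟩ := iInf_lt_iff.1 hδ
    exact ⟨⟨δ, hδ₀.le⟩, hδ₀, hδP⟩
  choose δ hδ₀ hδP using hδ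
  have hP : ∀ n, packingPre s (δ n) (F n ∩ E) ≠ ⊤ := fun n =>
    ((packingPre_mono inter_subset_left).trans_lt (hδP n)).ne
  refine ⟨fun n => F n ∩ E, δ, fun n => inter_subset_right, fun x hx => ?_, hδ₀, hP⟩
  obtain ⟨n, hn⟩ := mem_iUnion.1 (hEF hx)
  exact mem_iUnion.2 ⟨n, hn, hx⟩

lemma eventually_exists_dyadic_scale {δ : ℝ≥0} (hδ : 0 < δ) {Q : ℕ → Prop}
    (hQ : ∀ᶠ k in atTop, Q k) :
    ∀ᶠ r in 𝓝[>] (0 : ℝ), ∃ k, Q k ∧ ((δ * 2⁻¹ ^ k : ℝ≥0) : ℝ) < r ∧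
      r ≤ 2 * ((δ * 2⁻¹ ^ k : ℝ≥0) : ℝ) := by
  obtain ⟨N, hN⟩ := eventually_atTop.1 hQ
  have hδ' : (0 : ℝ) < δ := hδ
  filter_upwards [Ioo_mem_nhdsGT (by positivity : (0 : ℝ) < δ * 2⁻¹ ^ N)] with r ⟨hr₀, hrN⟩
  have hrN' : r / δ < 2⁻¹ ^ N := (div_lt_iff₀ hδ').2 (by linarith)
  obtain ⟨m, hm₁, hm₂⟩ := exists_nat_pow_near_of_lt_one (div_pos hr₀ hδ')
    (hrN'.le.trans (pow_le_one₀ (by norm_num) (by norm_num))) (by norm_num : (0 : ℝ) < 2⁻¹)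
    (by norm_num)
  have hNm : N ≤ m + 1 :=
    ((pow_lt_pow_iff_right_of_lt_one₀ (by norm_num) (by norm_num)).1 (hm₁.trans hrN')).le
  refine ⟨m + 1, hN _ hNm, ?_, ?_⟩
  · push_cast
    rwa [lt_div_iff₀ hδ', mul_comm] at hm₁
  · push_cast
    rw [div_le_iff₀ hδ'] at hm₂
    rw [pow_succ]
    linarith

lemma eventually_sq_mul_pow_le {q : ℝ} (hq₀ : 0 < q) (hq₁ : q < 1) {c : ℝ} (hc : 0 < c) :
    ∀ᶠ k : ℕ in atTop, ((k : ℝ) + 1) ^ 2 * q ^ k ≤ c := by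
  have hlim : Tendsto (fun k : ℕ => q⁻¹ * (((k + 1 : ℕ) : ℝ) ^ 2 * q ^ (k + 1))) atTop (𝓝 0) := by
    simpa using ((tendsto_add_atTop_iff_nat 1).2
      (tendsto_pow_const_mul_const_pow_of_abs_lt_one 2 (by rwa [abs_of_pos hq₀]))).const_mul q⁻¹
  filter_upwards [hlim.eventually (ge_mem_nhds hc)] with k hk
  calc ((k : ℝ) + 1) ^ 2 * q ^ k = q⁻¹ * (((k + 1 : ℕ) : ℝ) ^ 2 * q ^ (k + 1)) := by
        push_cast; field_simp; ring
    _ ≤ c := hk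

lemma eventually_rpow_le_mul_rpow {a : ℝ} (ha : 0 < a) {δ : ℝ≥0} (hδ : 0 < δ) {α β : ℝ}
    (hαβ : α < β) :
    ∀ᶠ k : ℕ in atTop, (2 * ((δ * 2⁻¹ ^ k : ℝ≥0) : ℝ)) ^ β
      ≤ a * ((((k : ℝ) + 1) ^ 2)⁻¹ * ((δ * 2⁻¹ ^ k : ℝ≥0) : ℝ) ^ α) := by
  have hδ' : (0 : ℝ) < δ := hδ
  set γ := β - α
  have hγ : 0 < γ := sub_pos.2 hαβ
  set q : ℝ := 2⁻¹ ^ γ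
  have hq₀ : 0 < q := by positivity
  have hq₁ : q < 1 := Real.rpow_lt_one (by norm_num) (by norm_num) hγ
  have hc : 0 < a / (2 ^ β * (δ : ℝ) ^ γ) := by positivity
  filter_upwards [eventually_sq_mul_pow_le hq₀ hq₁ hc] with k hk
  set t : ℝ := ((δ * 2⁻¹ ^ k : ℝ≥0) : ℝ)
  have ht : t ^ γ = (δ : ℝ) ^ γ * q ^ k := by
    simp only [t, q, NNReal.coe_mul, NNReal.coe_pow, NNReal.coe_inv, NNReal.coe_ofNat]
    rw [Real.mul_rpow (by positivity) (by positivity), ← Real.rpow_pow_comm (by norm_num)]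
  have htβ : t ^ β = t ^ α * ((δ : ℝ) ^ γ * q ^ k) := by
    rw [← ht, ← Real.rpow_add (by positivity)]
    congr 1
    ring
  rw [Real.mul_rpow (by norm_num) (by positivity), htβ]
  have hk' : ((k : ℝ) + 1) ^ 2 * (2 ^ β * ((δ : ℝ) ^ γ * q ^ k)) ≤ a := by
    rw [le_div_iff₀ (by positivity)] at hk
    linarith
  rw [← div_eq_inv_mul, mul_div_assoc', le_div_iff₀ (by positivity)]
  calc 2 ^ β * (t ^ α * ((δ : ℝ) ^ γ * q ^ k)) * ((k : ℝ) + 1) ^ 2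
      = t ^ α * (((k : ℝ) + 1) ^ 2 * (2 ^ β * ((δ : ℝ) ^ γ * q ^ k))) := by ring
    _ ≤ t ^ α * a := mul_le_mul_of_nonneg_left hk' (by positivity)
    _ = a * t ^ α := mul_comm _ _

lemma coe_mul_inv_two_pow_le (δ : ℝ≥0) (k : ℕ) : ((δ * 2⁻¹ ^ k : ℝ≥0) : ℝ) ≤ 2 * δ := by
  have hk : (2⁻¹ : ℝ) ^ k ≤ 1 := pow_le_one₀ (by norm_num) (by norm_num)
  push_cast
  nlinarith [δ.coe_nonneg]

lemma tsum_ofReal_inv_succ_sq_ne_top : ∑' k : ℕ, ENNReal.ofReal (((k : ℝ) + 1) ^ 2)⁻¹ ≠ ⊤ := by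
  have hsum : Summable fun k : ℕ => (((k : ℝ) + 1) ^ 2)⁻¹ := by
    simpa using (summable_nat_add_iff 1).2 (Real.summable_nat_pow_inv.2 one_lt_two)
  rw [← ENNReal.ofReal_tsum_of_nonneg (fun _ => by positivity) hsum]
  exact ENNReal.ofReal_ne_top

lemma ENNReal.log_div_log_le {m : ℝ≥0∞} {r β : ℝ} (hr₀ : 0 < r) (hr₁ : r < 1)
    (hm : ENNReal.ofReal (r ^ β) ≤ m) (hm_top : m ≠ ⊤) :
    ENNReal.log m / (Real.log r : EReal) ≤ β := by
  have hpos : 0 < r ^ β := Real.rpow_pos_of_pos hr₀ β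
  have hle : r ^ β ≤ m.toReal := (ENNReal.ofReal_le_iff_le_toReal hm_top).1 hm
  rw [← ENNReal.ofReal_toReal hm_top, ENNReal.log_ofReal_of_pos (hpos.trans_le hle),
    ← EReal.coe_div, EReal.coe_le_coe_iff, div_le_iff_of_neg (Real.log_neg hr₀ hr₁),
    ← Real.log_rpow hr₀]
  exact Real.log_le_log hpos hle

lemma upperLocalDim_le_of_forall_lt {X : Type*} [MetricSpace X] [MeasurableSpace X]
    {μ : Measure X} [IsFiniteMeasure μ] {x : X} {α : ℝ}
    (h : ∀ β : ℝ, α < β → ∀ᶠ r in 𝓝[>] 0, ENNReal.ofReal (r ^ β) ≤ μ (ball x r)) :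
    upperLocalDim μ x ≤ α := by
  refine EReal.le_of_forall_lt_iff_le.1 fun β hβ => ?_
  refine limsup_le_of_le (by isBoundedDefault) ?_
  filter_upwards [h β (EReal.coe_lt_coe_iff.1 hβ), Ioo_mem_nhdsGT one_pos] with r hr hr₁
  exact ENNReal.log_div_log_le hr₁.1 hr₁.2 hr (measure_ne_top μ _)

section NetMeasure

variable {X : Type*} [MetricSpace X] (s : ℝ) (G : ℕ → Set X) (δ : ℕ → ℝ≥0)

-- `(k+1)⁻²` is summable but decays slower than every `2^{-γk}`, so one measure serves all
-- exponents `β > s`; the `+ 1` avoids dividing by a vanishing premeasure.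
noncomputable def netMass (n k : ℕ) : ℝ≥0∞ :=
  2⁻¹ ^ n / (packingPre s (δ n) (G n) + 1) *
    ENNReal.ofReal ((((k : ℝ) + 1) ^ 2)⁻¹ * ((δ n * 2⁻¹ ^ k : ℝ≥0) : ℝ) ^ s)

variable {s G δ}

lemma netMass_mul_encard_le {n : ℕ} (hδ : 0 < δ n) (k : ℕ) :
    netMass s G δ n k * (maximalSeparatedSet (δ n * 2⁻¹ ^ k) (G n)).encard
      ≤ 2⁻¹ ^ n * ENNReal.ofReal (((k : ℝ) + 1) ^ 2)⁻¹ := by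
  set N := maximalSeparatedSet (δ n * 2⁻¹ ^ k) (G n)
  set P := packingPre s (δ n) (G n)
  have hpack : (N.encard : ℝ≥0∞) * ENNReal.ofReal (((δ n * 2⁻¹ ^ k : ℝ≥0) : ℝ) ^ s) ≤ P + 1 :=
    (encard_mul_le_packingPre maximalSeparatedSet_subset isSeparated_maximalSeparatedSet
      (by positivity) (coe_mul_inv_two_pow_le _ _)).trans le_self_add
  rw [netMass, ENNReal.ofReal_mul (by positivity), div_eq_mul_inv]
  calc
    _ = 2⁻¹ ^ n * ENNReal.ofReal (((k : ℝ) + 1) ^ 2)⁻¹ *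
        ((N.encard * ENNReal.ofReal (((δ n * 2⁻¹ ^ k : ℝ≥0) : ℝ) ^ s)) / (P + 1)) := by
      rw [div_eq_mul_inv]; ring
    _ ≤ 2⁻¹ ^ n * ENNReal.ofReal (((k : ℝ) + 1) ^ 2)⁻¹ * 1 :=
      mul_le_mul_right (ENNReal.div_le_of_le_mul (by rwa [one_mul])) _
    _ = _ := mul_one _

lemma eventually_ofReal_rpow_le_mul_netMass {A : ℝ≥0∞} (hA : A ≠ 0) {n : ℕ} (hδ : 0 < δ n)
    (hP : packingPre s (δ n) (G n) ≠ ⊤) {β : ℝ} (hsβ : s < β) :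
    ∀ᶠ k in atTop, ENNReal.ofReal ((2 * ((δ n * 2⁻¹ ^ k : ℝ≥0) : ℝ)) ^ β)
      ≤ A * netMass s G δ n k := by
  have hc : A * (2⁻¹ ^ n / (packingPre s (δ n) (G n) + 1)) ≠ 0 := by
    simp [hA, ENNReal.div_eq_zero_iff, hP]
  obtain ⟨a, -, ha, hac⟩ := ENNReal.lt_iff_exists_real_btwn.1 (pos_iff_ne_zero.2 hc)
  filter_upwards [eventually_rpow_le_mul_rpow (ENNReal.ofReal_pos.1 ha) hδ hsβ] with k hk
  rw [netMass, ← mul_assoc]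
  calc ENNReal.ofReal ((2 * ((δ n * 2⁻¹ ^ k : ℝ≥0) : ℝ)) ^ β)
      ≤ ENNReal.ofReal a * ENNReal.ofReal ((((k : ℝ) + 1) ^ 2)⁻¹ *
        ((δ n * 2⁻¹ ^ k : ℝ≥0) : ℝ) ^ s) := by
        rw [← ENNReal.ofReal_mul (ENNReal.ofReal_pos.1 ha).le]
        exact ENNReal.ofReal_le_ofReal hk
    _ ≤ _ := mul_le_mul_left hac.le _

variable [MeasurableSpace X] [MeasurableSingletonClass X]

-- The atom at `x₀` keeps the measure nonzero even when every net is empty.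
variable (s G δ) in
noncomputable def netMeasure (x₀ : X) : Measure X :=
  Measure.dirac x₀ + Measure.sum fun p : ℕ × ℕ =>
    netMass s G δ p.1 p.2 •
      Measure.count.restrict (maximalSeparatedSet (δ p.1 * 2⁻¹ ^ p.2) (G p.1))

lemma netMeasure_compl_eq_zero {K : Set X} {x₀ : X} (hx₀ : x₀ ∈ K) (hGK : ∀ n, G n ⊆ K) :
    netMeasure s G δ x₀ Kᶜ = 0 := by
  have hN : ∀ n (ε : ℝ≥0), Kᶜ ∩ maximalSeparatedSet ε (G n) = ∅ := fun n ε =>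
    disjoint_compl_left.mono_right (maximalSeparatedSet_subset.trans (hGK n)) |>.inter_eq
  simp [netMeasure, Measure.sum_apply_of_countable, Measure.dirac_apply, hx₀,
    Measure.restrict_apply' (finite_maximalSeparatedSet _ _).measurableSet, hN]

lemma netMeasure_univ_ne_top (hδ : ∀ n, 0 < δ n) (x₀ : X) : netMeasure s G δ x₀ univ ≠ ⊤ := by
  have hlevel : ∀ p : ℕ × ℕ, (netMass s G δ p.1 p.2 •
      Measure.count.restrict (maximalSeparatedSet (δ p.1 * 2⁻¹ ^ p.2) (G p.1))) univ
      ≤ 2⁻¹ ^ p.1 * ENNReal.ofReal (((p.2 : ℝ) + 1) ^ 2)⁻¹ := fun p => by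
    rw [Measure.smul_apply, Measure.restrict_apply_univ,
      Measure.count_apply (finite_maximalSeparatedSet _ _).measurableSet, smul_eq_mul]
    exact netMass_mul_encard_le (hδ p.1) p.2
  have htot : ∑' p : ℕ × ℕ, 2⁻¹ ^ p.1 * ENNReal.ofReal (((p.2 : ℝ) + 1) ^ 2)⁻¹ ≠ ⊤ := by
    simp only [ENNReal.tsum_prod', ENNReal.tsum_mul_left, ENNReal.tsum_mul_right,
      ENNReal.tsum_geometric, ENNReal.one_sub_inv_two, inv_inv]
    exact ENNReal.mul_ne_top (by simp) tsum_ofReal_inv_succ_sq_ne_top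
  rw [netMeasure, Measure.add_apply, Measure.sum_apply _ MeasurableSet.univ]
  exact ENNReal.add_ne_top.2 ⟨measure_ne_top _ _,
    ne_top_of_le_ne_top htot (ENNReal.tsum_le_tsum hlevel)⟩

lemma netMass_le_netMeasure_ball {n k : ℕ} (hδ : 0 < δ n) (hP : packingPre s (δ n) (G n) ≠ ⊤)
    {x : X} (hx : x ∈ G n) {r : ℝ} (hr : ((δ n * 2⁻¹ ^ k : ℝ≥0) : ℝ) < r) (x₀ : X) :
    netMass s G δ n k ≤ netMeasure s G δ x₀ (ball x r) := by
  set N := maximalSeparatedSet (δ n * 2⁻¹ ^ k) (G n)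
  obtain ⟨y, hyN, hxy⟩ := isCover_maximalSeparatedSet_of_packingPre_ne_top (by positivity)
    (coe_mul_inv_two_pow_le _ _) hP hx
  have hy : y ∈ ball x r := by
    rw [mem_ball, dist_comm, ← ENNReal.ofReal_lt_ofReal_iff_of_nonneg dist_nonneg, ← edist_dist]
    exact hxy.trans_lt (by simpa [ENNReal.ofReal_coe_nnreal] using
      (ENNReal.ofReal_lt_ofReal_iff_of_nonneg (by positivity)).2 hr)
  have hcount : 1 ≤ Measure.count.restrict N (ball x r) := by
    rw [Measure.restrict_apply' (finite_maximalSeparatedSet _ _).measurableSet,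
      ← Measure.count_singleton y]
    exact measure_mono (singleton_subset_iff.2 ⟨hy, hyN⟩)
  calc netMass s G δ n k ≤ (netMass s G δ n k • Measure.count.restrict N) (ball x r) := by
        simpa using mul_le_mul_right hcount (netMass s G δ n k)
    _ ≤ (Measure.sum fun p : ℕ × ℕ => netMass s G δ p.1 p.2 •
          Measure.count.restrict (maximalSeparatedSet (δ p.1 * 2⁻¹ ^ p.2) (G p.1))) (ball x r) :=
        Measure.le_iff'.1 (Measure.le_sum _ (n, k)) _
    _ ≤ netMeasure s G δ x₀ (ball x r) := by
        rw [netMeasure, Measure.add_apply]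
        exact le_add_self

end NetMeasure

theorem exists_isProbabilityMeasure_upperLocalDim_le {X : Type*} [MetricSpace X]
    [MeasurableSpace X] [MeasurableSingletonClass X] {K E : Set X} {x₀ : X} (hx₀ : x₀ ∈ K)
    (hEK : E ⊆ K) {α : ℝ} (hα : 0 ≤ α) (hE : packingMeasure α E < ⊤) :
    ∃ μ : Measure X, IsProbabilityMeasure μ ∧ μ Kᶜ = 0 ∧ ∀ x ∈ E, upperLocalDim μ x ≤ α := by
  obtain ⟨G, δ, hGE, hEG, hδ, hP⟩ := exists_cover_packingPre_ne_top hE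
  set μ₀ := netMeasure α G δ x₀
  have : IsFiniteMeasure μ₀ := ⟨(netMeasure_univ_ne_top hδ x₀).lt_top⟩
  have : NeZero μ₀ := ⟨fun h => by simpa [μ₀, netMeasure] using congrArg (· univ) h⟩
  refine ⟨(μ₀ univ)⁻¹ • μ₀, inferInstance, by
    simp [μ₀, netMeasure_compl_eq_zero hx₀ fun n => (hGE n).trans hEK], fun x hx => ?_⟩
  obtain ⟨n, hxn⟩ := mem_iUnion.1 (hEG hx)
  refine upperLocalDim_le_of_forall_lt fun β hβ => ?_
  have hZ : (μ₀ univ)⁻¹ ≠ 0 := ENNReal.inv_ne_zero.2 (measure_ne_top _ _)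
  filter_upwards [eventually_exists_dyadic_scale (hδ n)
    (eventually_ofReal_rpow_le_mul_netMass hZ (hδ n) (hP n) hβ)] with r ⟨k, hk, hkr, hrk⟩
  calc ENNReal.ofReal (r ^ β)
      ≤ ENNReal.ofReal ((2 * ((δ n * 2⁻¹ ^ k : ℝ≥0) : ℝ)) ^ β) :=
        ENNReal.ofReal_le_ofReal
          (Real.rpow_le_rpow ((NNReal.coe_nonneg _).trans hkr.le) hrk (by linarith))
    _ ≤ (μ₀ univ)⁻¹ * netMass α G δ n k := hk
    _ ≤ ((μ₀ univ)⁻¹ • μ₀) (ball x r) :=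
        mul_le_mul_right (netMass_le_netMeasure_ball (hδ n) (hP n) hxn hkr x₀) _

lemma exists_probabilityMeasure_measOn_eq {d : ℕ} {K : Set (EuclideanSpace ℝ (Fin d))}
    (hK : MeasurableSet K) (μ : Measure (EuclideanSpace ℝ (Fin d))) [IsProbabilityMeasure μ]
    (hμK : μ Kᶜ = 0) : ∃ ν : ProbabilityMeasure K, measOn ν = μ := by
  have hrestrict : μ.restrict K = μ := Measure.restrict_eq_self_of_ae_mem (ae_iff.2 hμK)
  have : IsProbabilityMeasure (μ.comap Subtype.val) := ⟨by
    rw [(MeasurableEmbedding.subtype_coe hK).comap_apply, image_univ, Subtype.range_coe,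
      ← Measure.restrict_apply_univ, hrestrict, measure_univ]⟩
  exact ⟨⟨μ.comap Subtype.val, this⟩, (map_comap_subtype_coe hK μ).trans hrestrict⟩

theorem exists_measure_upperLocalDim_le_general
    {d : ℕ} (K : Set (EuclideanSpace ℝ (Fin d))) (hK : IsCompact K) (hne : K.Nonempty)
    (E : Set (EuclideanSpace ℝ (Fin d))) (hEK : E ⊆ K)
    (α : ℝ) (hα : 0 < α) (hfin : packingMeasure α E < ⊤) :
    ∃ μ : ProbabilityMeasure K, ∀ x ∈ E, upperLocalDim (measOn μ) x ≤ (α : EReal) := by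
  obtain ⟨x₀, hx₀⟩ := hne
  obtain ⟨μ, hμ, hμK, hdim⟩ := exists_isProbabilityMeasure_upperLocalDim_le hx₀ hEK hα.le hfin
  obtain ⟨ν, rfl⟩ := exists_probabilityMeasure_measOn_eq hK.measurableSet μ hμK
  exact ⟨ν, hdim⟩

theorem exists_measure_upperLocalDim_le
    {d : ℕ} (K : Set (EuclideanSpace ℝ (Fin d))) (hK : IsCompact K) (hne : K.Nonempty)
    (E : Set (EuclideanSpace ℝ (Fin d))) (hEK : E ⊆ K) (hE : IsCompact E)
    (α : ℝ) (hα : 0 < α) (hfin : packingMeasure α E < ⊤) :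
    ∃ μ : ProbabilityMeasure K, ∀ x ∈ E, upperLocalDim (measOn μ) x ≤ (α : EReal) :=
  exists_measure_upperLocalDim_le_general K hK hne E hEK α hα hfin
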